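/- arXiv:1006.5252 — 2 statements merged into one kernel-verified Lean document; each statement's English description precedes it below -/
import Mathlib

section
/- (Theorem 2) Let k ≥ 1 and for each i ∈ Fin k let (B_i, Ω_i) be a partial matrix over a field F with finite row index m_i and finite column index n_i. Let M be the block partial matrix on rows Σ i, m_i and columns Σ i, n_i whose (i, i) diagonal block is B_i (with known positions Ω_i) and whose off-diagonal blocks are entirely unknown. Then mr(M) = max over i ∈ Fin k of mr(B_i, Ω_i). -/
/-- `N` is a completion of the partial matrix `(M, Ω)`: it agrees with `M`
on all known positions `Ω`. -/
def IsCompletion {F m n : Type*} [Field F] (M : Matrix m n F) (Ω : Set (m × n))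
    (N : Matrix m n F) : Prop :=
  ∀ p ∈ Ω, N p.1 p.2 = M p.1 p.2

/-- The minimum rank of the partial matrix `(M, Ω)`: the minimum of the ranks of
its completions. -/
noncomputable def mr {F m n : Type*} [Field F] [Fintype m] [Fintype n]
    (M : Matrix m n F) (Ω : Set (m × n)) : ℕ :=
  sInf {r | ∃ N : Matrix m n F, IsCompletion M Ω N ∧ N.rank = r}

/-!
A completion of the unknown-diagonalization restricts on each diagonal block to a completion of
that block, and taking submatrices does not increase rank; this gives `mr ≥ max mr(Bᵢ)`.
Conversely, if every block has a completion `Nᵢ` of rank at most `r`, factor `Nᵢ = Pᵢ Qᵢ` through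
`F^r`; stacking the `Pᵢ` vertically and the `Qᵢ` horizontally gives a matrix `P Q` of rank at most
`r` whose diagonal blocks are the `Nᵢ`, and since the off-diagonal blocks are unknown it is a
completion.
-/

open Module Matrix

section MinRank

variable {F m n : Type*} [Field F]

theorem exists_isCompletion (M : Matrix m n F) (Ω : Set (m × n)) : ∃ N, IsCompletion M Ω N := by
  classical
  exact ⟨fun x y => if (x, y) ∈ Ω then M x y else 0, fun p hp => if_pos hp⟩

variable [Fintype m] [Fintype n]

theorem IsCompletion.mr_le_rank {M N : Matrix m n F} {Ω : Set (m × n)}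
    (hN : IsCompletion M Ω N) : mr M Ω ≤ N.rank :=
  Nat.sInf_le ⟨N, hN, rfl⟩

theorem exists_isCompletion_rank_eq_mr (M : Matrix m n F) (Ω : Set (m × n)) :
    ∃ N, IsCompletion M Ω N ∧ N.rank = mr M Ω :=
  have ⟨N, hN⟩ := exists_isCompletion M Ω
  Nat.sInf_mem (s := {r | ∃ N, IsCompletion M Ω N ∧ N.rank = r}) ⟨N.rank, N, hN, rfl⟩

theorem mr_le_mr_of_submatrix {m' n' : Type*} [Fintype m'] [Fintype n']
    {B : Matrix m' n' F} {Ω' : Set (m' × n')} {M : Matrix m n F} {Ω : Set (m × n)}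
    (f : m' → m) (g : n' → n) (hΩ : ∀ p ∈ Ω', (f p.1, g p.2) ∈ Ω)
    (hB : ∀ p ∈ Ω', M (f p.1) (g p.2) = B p.1 p.2) : mr B Ω' ≤ mr M Ω := by
  obtain ⟨N, hN, hrank⟩ := exists_isCompletion_rank_eq_mr M Ω
  have hsub : IsCompletion B Ω' (N.submatrix f g) := fun p hp =>
    (hN _ (hΩ p hp)).trans (hB p hp)
  calc mr B Ω' ≤ (N.submatrix f g).rank := hsub.mr_le_rank
    _ ≤ N.rank := rank_submatrix_le N f g
    _ = mr M Ω := hrank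

end MinRank

theorem LinearMap.exists_comp_eq_of_finrank_range_le {K V W : Type*} [Field K]
    [AddCommGroup V] [Module K V] [FiniteDimensional K V] [AddCommGroup W] [Module K W]
    (f : V →ₗ[K] W) {r : ℕ} (hr : finrank K (range f) ≤ r) :
    ∃ (u : V →ₗ[K] Fin r → K) (v : (Fin r → K) →ₗ[K] W), v ∘ₗ u = f := by
  obtain ⟨ι, hι⟩ := finrank_le_iff_exists_linearMap.1 (hr.trans (finrank_fin_fun K).ge)
  obtain ⟨π, hπ⟩ := ι.exists_leftInverse_of_injective (ker_eq_bot.2 hι)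
  refine ⟨ι ∘ₗ f.rangeRestrict, (range f).subtype ∘ₗ π, LinearMap.ext fun x => ?_⟩
  simp [← comp_apply π ι, hπ]

theorem Matrix.exists_mul_eq_of_rank_le {F m n : Type*} [Field F] [Fintype n]
    (A : Matrix m n F) {r : ℕ} (hr : A.rank ≤ r) :
    ∃ (P : Matrix m (Fin r) F) (Q : Matrix (Fin r) n F), P * Q = A := by
  classical
  obtain ⟨u, v, hvu⟩ := A.mulVecLin.exists_comp_eq_of_finrank_range_le hr
  refine ⟨LinearMap.toMatrix' v, LinearMap.toMatrix' u, ?_⟩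
  rw [← LinearMap.toMatrix'_comp, hvu, ← toLin'_apply', LinearMap.toMatrix'_toLin']

theorem Matrix.exists_rank_le_of_diagonal_blocks {F ι : Type*} [Field F] [Fintype ι]
    {mI nI : ι → Type*} [∀ i, Fintype (nI i)]
    (A : ∀ i, Matrix (mI i) (nI i) F) {r : ℕ} (hr : ∀ i, (A i).rank ≤ r) :
    ∃ N : Matrix (Σ i, mI i) (Σ i, nI i) F,
      N.rank ≤ r ∧ ∀ i x y, N ⟨i, x⟩ ⟨i, y⟩ = A i x y := by
  classical
  choose P Q hPQ using fun i => (A i).exists_mul_eq_of_rank_le (hr i)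
  let P' : Matrix (Σ i, mI i) (Fin r) F := fun p s => P p.1 p.2 s
  let Q' : Matrix (Fin r) (Σ i, nI i) F := fun s q => Q q.1 s q.2
  refine ⟨P' * Q', ?_, fun i x y => ?_⟩
  · calc (P' * Q').rank ≤ P'.rank := rank_mul_le_left _ _
      _ ≤ Fintype.card (Fin r) := rank_le_card_width P'
      _ = r := Fintype.card_fin r
  · rw [← hPQ]
    rfl

theorem mr_udiag_general {F : Type*} [Field F] {k : ℕ}
    {mI nI : Fin k → Type*} [∀ i, Fintype (mI i)] [∀ i, Fintype (nI i)]
    (B : ∀ i, Matrix (mI i) (nI i) F) (ΩB : ∀ i, Set (mI i × nI i))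
    (M : Matrix (Σ i, mI i) (Σ i, nI i) F) (ΩM : Set ((Σ i, mI i) × (Σ i, nI i)))
    (hM : ∀ (i : Fin k) (r : mI i) (c : nI i), M ⟨i, r⟩ ⟨i, c⟩ = B i r c)
    (hΩ : ∀ (p : Σ i, mI i) (q : Σ i, nI i),
      (p, q) ∈ ΩM ↔ ∃ h : p.1 = q.1, (h ▸ p.2, q.2) ∈ ΩB q.1) :
    mr M ΩM = Finset.univ.sup (fun i : Fin k => mr (B i) (ΩB i)) := by
  apply le_antisymm
  · choose N hN hNrank using fun i => exists_isCompletion_rank_eq_mr (B i) (ΩB i)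
    obtain ⟨N', hN'rank, hN'⟩ := exists_rank_le_of_diagonal_blocks N
      (r := Finset.univ.sup fun i => mr (B i) (ΩB i))
      fun i => (hNrank i).trans_le (Finset.le_sup (f := fun i => mr (B i) (ΩB i)) (Finset.mem_univ i))
    have hcompl : IsCompletion M ΩM N' := by
      rintro ⟨⟨i, x⟩, ⟨j, y⟩⟩ hp
      obtain ⟨hij, hxy⟩ : ∃ h : i = j, (h ▸ x, y) ∈ ΩB j := (hΩ _ _).1 hp
      subst hij
      exact (hN' i x y).trans ((hN i (x, y) hxy).trans (hM i x y).symm)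
    exact hcompl.mr_le_rank.trans hN'rank
  · exact Finset.sup_le fun i _ => mr_le_mr_of_submatrix (Sigma.mk i) (Sigma.mk i)
      (fun p hp => (hΩ _ _).2 ⟨rfl, hp⟩) fun p _ => hM i p.1 p.2

/-- Theorem 2: the minimum rank of an unknown-diagonalization
`u-diag(B₁, …, B_k)` (diagonal blocks are the partial matrices `Bᵢ`, all
off-diagonal entries unknown) is the maximum of the minimum ranks of the blocks. -/
theorem mr_udiag {F : Type*} [Field F] {k : ℕ} (hk : 1 ≤ k)
    {mI nI : Fin k → Type*} [∀ i, Fintype (mI i)] [∀ i, Fintype (nI i)]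
    (B : ∀ i, Matrix (mI i) (nI i) F) (ΩB : ∀ i, Set (mI i × nI i))
    (M : Matrix (Σ i, mI i) (Σ i, nI i) F) (ΩM : Set ((Σ i, mI i) × (Σ i, nI i)))
    (hM : ∀ (i : Fin k) (r : mI i) (c : nI i), M ⟨i, r⟩ ⟨i, c⟩ = B i r c)
    (hΩ : ∀ (p : Σ i, mI i) (q : Σ i, nI i),
      (p, q) ∈ ΩM ↔ ∃ h : p.1 = q.1, (h ▸ p.2, q.2) ∈ ΩB q.1) :
    mr M ΩM = Finset.univ.sup (fun i : Fin k => mr (B i) (ΩB i)) :=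
  mr_udiag_general B ΩB M ΩM hM hΩ
end

section
/- Let T be a partial matrix over a field F with finitely many columns such that (i) every two columns of T are comparable under the donor relation, and (ii) for every column j of T with known row set K_j, the vector of known entries (T r j)_{r ∈ K_j} does NOT lie in the F-linear span of the vectors (T r d)_{r ∈ K_j} as d ranges over the columns d ≠ j of T that are donors for column j. Then mr(T) equals the number of columns of T; consequently, every completion of T has rank equal to its number of columns. -/
/-- Proposition: if every two columns of the partial matrix `T` are comparable under
the donor relation, and no column's known part lies in the span of the corresponding
restrictions of its donor columns, then `mr T` equals the number of columns of `T`;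
consequently every completion of `T` has full column rank. -/
theorem mr_eq_card_cols_of_comparable {F m n : Type*} [Field F] [Fintype m] [Fintype n]
    (T : Matrix m n F) (Ω : Set (m × n))
    (hcomp : ∀ j j' : n,
      (∀ r, (r, j') ∈ Ω → (r, j) ∈ Ω) ∨ (∀ r, (r, j) ∈ Ω → (r, j') ∈ Ω))
    (hind : ∀ j : n,
      (fun r : {r // (r, j) ∈ Ω} => T r j) ∉
        Submodule.span F {w : {r // (r, j) ∈ Ω} → F |
          ∃ d : n, d ≠ j ∧ (∀ r, (r, j) ∈ Ω → (r, d) ∈ Ω) ∧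
            w = fun r : {r // (r, j) ∈ Ω} => T r d}) :
    mr T Ω = Fintype.card n ∧
      ∀ N : Matrix m n F, IsCompletion T Ω N → N.rank = Fintype.card n := by
  classical
  have key : ∀ N : Matrix m n F, IsCompletion T Ω N → N.rank = Fintype.card n := by
    intro N hN
    -- First: the columns of N are linearly independent.
    have hli : ∀ g : n → F, (∑ i, g i • (fun r => N r i)) = (0 : m → F) → ∀ i, g i = 0 := by
      intro g hg
      by_contra hne
      push_neg at hne
      obtain ⟨j0, hj0⟩ := hne
      set S : Finset n := Finset.univ.filter (fun j => g j ≠ 0) with hS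
      have hS0 : S.Nonempty := ⟨j0, by simp [hS, hj0]⟩
      obtain ⟨j, hjS, hmin⟩ := S.exists_min_image
        (fun j => (Finset.univ.filter (fun r => (r, j) ∈ Ω)).card) hS0
      have hgj : g j ≠ 0 := by simpa [hS] using hjS
      have hdonor : ∀ d ∈ S, ∀ r, (r, j) ∈ Ω → (r, d) ∈ Ω := by
        intro d hd
        rcases hcomp d j with h | h
        · exact h
        · have hsub : (Finset.univ.filter (fun r => (r, d) ∈ Ω)) ⊆
              (Finset.univ.filter (fun r => (r, j) ∈ Ω)) := by
            intro r hr
            simp only [Finset.mem_filter, Finset.mem_univ, true_and] at hr ⊢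
            exact h r hr
          have hcard := hmin d hd
          have heq : (Finset.univ.filter (fun r => (r, d) ∈ Ω)) =
              (Finset.univ.filter (fun r => (r, j) ∈ Ω)) :=
            Finset.eq_of_subset_of_card_le hsub hcard
          intro r hr
          have : r ∈ Finset.univ.filter (fun r => (r, d) ∈ Ω) := by
            rw [heq]; simp [hr]
          simpa using this
      apply hind j
      have hvj : (fun r : {r // (r, j) ∈ Ω} => T r j)
          = ∑ i ∈ S.erase j, ((-(g i)) / (g j)) • (fun r : {r // (r, j) ∈ Ω} => T r.1 i) := by
        funext r
        have h0 : ∑ i, g i * N r.1 i = 0 := by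
          have := congrFun hg r.1
          simpa [Finset.sum_apply] using this
        have h1 : ∑ i ∈ S, g i * N r.1 i = 0 := by
          rw [← h0]
          apply Finset.sum_subset (Finset.subset_univ S)
          intro x _ hx
          simp only [hS, Finset.mem_filter, Finset.mem_univ, true_and, not_not] at hx
          simp [hx]
        have h2 : ∑ i ∈ S, g i * T r.1 i = 0 := by
          rw [← h1]
          refine Finset.sum_congr rfl fun i hi => ?_
          rw [hN (r.1, i) (hdonor i hi r.1 r.2)]
        have h3 : g j * T r.1 j + ∑ i ∈ S.erase j, g i * T r.1 i = 0 := by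
          rw [← h2]
          exact Finset.add_sum_erase S (fun i => g i * T r.1 i) hjS
        have h4 : g j * T r.1 j = -(∑ i ∈ S.erase j, g i * T r.1 i) := by
          linear_combination h3
        have h5 : ∑ i ∈ S.erase j, (-(g i)) / (g j) * T r.1 i
            = (g j)⁻¹ * -(∑ i ∈ S.erase j, g i * T r.1 i) := by
          rw [mul_neg, Finset.mul_sum, ← Finset.sum_neg_distrib]
          refine Finset.sum_congr rfl fun i _ => ?_
          field_simp
        simp only [Finset.sum_apply, Pi.smul_apply, smul_eq_mul]
        rw [h5, ← h4]
        field_simp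
      rw [hvj]
      refine Submodule.sum_mem _ fun i hi => Submodule.smul_mem _ _ ?_
      exact Submodule.subset_span
        ⟨i, Finset.ne_of_mem_erase hi,
          fun r hr => hdonor i (Finset.mem_of_mem_erase hi) r hr, rfl⟩
    -- Injectivity of mulVecLin
    have hinj : Function.Injective N.mulVecLin := by
      rw [← LinearMap.ker_eq_bot, LinearMap.ker_eq_bot']
      intro g hg
      have : (∑ i, g i • (fun r => N r i)) = (0 : m → F) := by
        funext r
        have := congrFun hg r
        simpa [Matrix.mulVecLin_apply, Matrix.mulVec, dotProduct,
          Finset.sum_apply, mul_comm] using this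
      funext i
      exact hli g this i
    rw [Matrix.rank, LinearMap.finrank_range_of_inj hinj,
      Module.finrank_fintype_fun_eq_card]
  refine ⟨?_, key⟩
  set N0 : Matrix m n F := fun i j => if (i, j) ∈ Ω then T i j else 0 with hN0def
  have hN0 : IsCompletion T Ω N0 := fun p hp => by simp [hN0def, hp]
  have hset : {r | ∃ N : Matrix m n F, IsCompletion T Ω N ∧ N.rank = r}
      = {Fintype.card n} := by
    ext r
    simp only [Set.mem_setOf_eq, Set.mem_singleton_iff]
    constructor
    · rintro ⟨N, hN, rfl⟩; exact key N hN
    · rintro rfl; exact ⟨N0, hN0, key N0 hN0⟩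
  rw [mr, hset, csInf_singleton]
end
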